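/- arXiv:2111.04543 — 6 statements merged into one kernel-verified Lean document; each statement's English description precedes it below -/
import Mathlib

section
/- Every graph class with tree-independence number at most k is (tw,ω)-bounded with binding function f(p) = R(p+1, k+1) − 2, i.e., if G has a tree decomposition in which every bag induces a subgraph with independence number at most k, and ω(G) = p, then the treewidth of G is at most R(p+1, k+1) − 2, where R denotes the Ramsey number. -/
open SimpleGraph

/-- `S` is an independent set in `G`. -/
def IsIndepOn {V : Type} (G : SimpleGraph V) (S : Set V) : Prop :=
  S.Pairwise fun u v => ¬ G.Adj u v

/-- The independence number of `G`. -/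
noncomputable def indepNum {V : Type} (G : SimpleGraph V) : ℕ :=
  sSup {n | ∃ S : Set V, IsIndepOn G S ∧ S.ncard = n}

/-- The clique number of `G`. -/
noncomputable def cliqueNumber {V : Type} (G : SimpleGraph V) : ℕ :=
  sSup {n | ∃ S : Set V, G.IsClique S ∧ S.ncard = n}

/-- A tree decomposition of a graph `G`. -/
structure TreeDecomp {V : Type} (G : SimpleGraph V) where
  ι : Type
  tree : SimpleGraph ι
  tree_isTree : tree.IsTree
  bag : ι → Set V
  mem_bag : ∀ v : V, ∃ t, v ∈ bag t
  edge_bag : ∀ ⦃u v : V⦄, G.Adj u v → ∃ t, u ∈ bag t ∧ v ∈ bag t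
  bag_connected : ∀ v : V, (tree.induce {t | v ∈ bag t}).Connected

/-- The independence number of a family of bags: the maximum independence number
of a subgraph of `G` induced by some bag. -/
noncomputable def bagAlpha {V : Type} (G : SimpleGraph V) {ι : Type} (bag : ι → Set V) : ℕ :=
  sSup {n | ∃ t, ∃ S : Set V, S ⊆ bag t ∧ IsIndepOn G S ∧ S.ncard = n}

/-- The independence number of a tree decomposition. -/
noncomputable def tdAlpha {V : Type} {G : SimpleGraph V} (td : TreeDecomp G) : ℕ :=
  bagAlpha G td.bag

/-- The width of a tree decomposition: maximum bag size minus one. -/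
noncomputable def tdWidth {V : Type} {G : SimpleGraph V} (td : TreeDecomp G) : ℕ :=
  sSup {n | ∃ t, (td.bag t).ncard = n} - 1

/-- The treewidth of `G`. -/
noncomputable def treewidth {V : Type} (G : SimpleGraph V) : ℕ :=
  sInf {w | ∃ td : TreeDecomp G, tdWidth td = w}

/-- The tree-independence number of `G`. -/
noncomputable def treeIndepNum {V : Type} (G : SimpleGraph V) : ℕ :=
  sInf {k | ∃ td : TreeDecomp G, tdAlpha td = k}

/-- A graph is chordal if it has no induced cycle of length at least four. -/
def Chordal {V : Type} (G : SimpleGraph V) : Prop :=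
  ∀ n : ℕ, 4 ≤ n → IsEmpty (cycleGraph n ↪g G)

/-- The Ramsey number `R(p, q)`: the least `N` such that every graph on `N` vertices
contains a clique of size `p` or an independent set of size `q`. -/
noncomputable def ramsey (p q : ℕ) : ℕ :=
  sInf {N | ∀ G : SimpleGraph (Fin N),
    (∃ S : Set (Fin N), G.IsClique S ∧ S.ncard = p) ∨
    (∃ S : Set (Fin N), IsIndepOn G S ∧ S.ncard = q)}

/-!
A bag with at least `R(p + 1, k + 1)` vertices would contain either a clique of size `p + 1`,
impossible as `ω(G) = p`, or an independent set of size `k + 1`, impossible as the bags have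
independence number at most `k`. So every bag has at most `R(p + 1, k + 1) - 1` vertices.
That the Ramsey numbers are finite follows from the Erdős–Szekeres bound `R(p, q) ≤ C(p + q, p)`.
-/

open Set

theorem isIndepOn_iff_isClique_compl {V : Type} {G : SimpleGraph V} {S : Set V} :
    IsIndepOn G S ↔ Gᶜ.IsClique S :=
  G.isClique_compl.symm

namespace SimpleGraph

variable {V : Type} {H : SimpleGraph V} {v : V} {S : Set V}

theorem isClique_insert_of_subset_neighborSet (hS : H.IsClique S)
    (hSv : S ⊆ H.neighborSet v) : H.IsClique (insert v S) :=
  hS.insert fun _ hb _ => hSv hb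

theorem ncard_insert_of_subset_neighborSet (hSv : S ⊆ H.neighborSet v) (hS : S.Finite) :
    (insert v S).ncard = S.ncard + 1 :=
  ncard_insert_of_notMem (fun hv => H.notMem_neighborSet_self (hSv hv)) hS

end SimpleGraph

theorem exists_isClique_or_isClique_compl_of_choose_le {V : Type} (G : SimpleGraph V) :
    ∀ (p q : ℕ) {A : Set V}, A.Finite → (p + q).choose p ≤ A.ncard →
      (∃ S ⊆ A, G.IsClique S ∧ S.ncard = p) ∨ (∃ S ⊆ A, Gᶜ.IsClique S ∧ S.ncard = q)
  | 0, _, _, _, _ => .inl ⟨∅, empty_subset _, isClique_empty, ncard_empty V⟩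
  | _ + 1, 0, _, _, _ => .inr ⟨∅, empty_subset _, isClique_empty, ncard_empty V⟩
  | p + 1, q + 1, A, hA, hcard => by
    obtain ⟨v, hv⟩ : A.Nonempty := by
      have := Nat.choose_pos (Nat.le_add_right (p + 1) (q + 1))
      rw [← ncard_pos hA]
      omega
    set N := (A \ {v}) ∩ G.neighborSet v
    set M := (A \ {v}) \ G.neighborSet v
    have hsplit : N.ncard + M.ncard + 1 = A.ncard := by
      rw [ncard_inter_add_ncard_sdiff_eq_ncard _ _ hA.sdiff, ncard_sdiff_singleton_add_one hv hA]
    have hpascal : (p + 1 + (q + 1)).choose (p + 1)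
        = (p + (q + 1)).choose p + (p + 1 + q).choose (p + 1) := by
      rw [show p + 1 + (q + 1) = p + (q + 1) + 1 by omega, Nat.choose_succ_succ',
        show p + (q + 1) = p + 1 + q by omega]
    have hNA : N ⊆ A := inter_subset_left.trans sdiff_subset
    have hMA : M ⊆ A := sdiff_subset.trans sdiff_subset
    have hMv : M ⊆ Gᶜ.neighborSet v := fun w hw =>
      (compl_adj G v w).2 ⟨fun hvw => hw.1.2 hvw.symm, hw.2⟩
    by_cases hN : (p + (q + 1)).choose p ≤ N.ncard
    · rcases exists_isClique_or_isClique_compl_of_choose_le G p (q + 1) (hA.subset hNA) hN with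
        ⟨S, hSN, hS, hcard⟩ | ⟨S, hSN, hS, hcard⟩
      · have hSv := hSN.trans inter_subset_right
        exact .inl ⟨insert v S, insert_subset hv (hSN.trans hNA),
          isClique_insert_of_subset_neighborSet hS hSv,
          by rw [ncard_insert_of_subset_neighborSet hSv (hA.subset (hSN.trans hNA)), hcard]⟩
      · exact .inr ⟨S, hSN.trans hNA, hS, hcard⟩
    · have hM : (p + 1 + q).choose (p + 1) ≤ M.ncard := by omega
      rcases exists_isClique_or_isClique_compl_of_choose_le G (p + 1) q (hA.subset hMA) hM with
        ⟨S, hSM, hS, hcard⟩ | ⟨S, hSM, hS, hcard⟩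
      · exact .inl ⟨S, hSM.trans hMA, hS, hcard⟩
      · have hSv := hSM.trans hMv
        exact .inr ⟨insert v S, insert_subset hv (hSM.trans hMA),
          isClique_insert_of_subset_neighborSet hS hSv,
          by rw [ncard_insert_of_subset_neighborSet hSv (hA.subset (hSM.trans hMA)), hcard]⟩

theorem ramsey_spec (p q : ℕ) (G : SimpleGraph (Fin (ramsey p q))) :
    (∃ S, G.IsClique S ∧ S.ncard = p) ∨ (∃ S, IsIndepOn G S ∧ S.ncard = q) := by
  refine Nat.sInf_mem (s := {N | ∀ G : SimpleGraph (Fin N),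
    (∃ S, G.IsClique S ∧ S.ncard = p) ∨ (∃ S, IsIndepOn G S ∧ S.ncard = q)})
    ⟨(p + q).choose p, fun G => ?_⟩ G
  rcases exists_isClique_or_isClique_compl_of_choose_le G p q (toFinite univ) (by simp) with
    ⟨S, -, hS, hcard⟩ | ⟨S, -, hS, hcard⟩
  exacts [.inl ⟨S, hS, hcard⟩, .inr ⟨S, isIndepOn_iff_isClique_compl.2 hS, hcard⟩]

theorem exists_isClique_or_isIndepOn_of_ramsey_le {V : Type} (G : SimpleGraph V) {p q : ℕ}
    {A : Set V} (hA : A.Finite) (h : ramsey p q ≤ A.ncard) :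
    (∃ S ⊆ A, G.IsClique S ∧ S.ncard = p) ∨ (∃ S ⊆ A, IsIndepOn G S ∧ S.ncard = q) := by
  have : Finite A := hA
  let f : Fin (ramsey p q) ↪ V := (Fin.castLEEmb (h.trans_eq (Nat.card_coe_set_eq A).symm)).trans
    ((Finite.equivFin A).symm.toEmbedding.trans (Function.Embedding.subtype _))
  have hfA : range f ⊆ A := range_subset_iff.2 fun _ => Subtype.prop _
  rcases ramsey_spec p q (G.comap f) with ⟨S, hS, hcard⟩ | ⟨S, hS, hcard⟩
  · exact .inl ⟨f '' S, (image_subset_range _ _).trans hfA,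
      f.injective.injOn.pairwise_image.2 hS, (ncard_image_of_injective _ f.injective).trans hcard⟩
  · exact .inr ⟨f '' S, (image_subset_range _ _).trans hfA,
      f.injective.injOn.pairwise_image.2 hS, (ncard_image_of_injective _ f.injective).trans hcard⟩

section Bounds

variable {V : Type} [Finite V] {G : SimpleGraph V} {S : Set V}

theorem ncard_le_cliqueNumber (hS : G.IsClique S) : S.ncard ≤ cliqueNumber G :=
  le_csSup ⟨Nat.card V, by rintro _ ⟨T, -, rfl⟩; exact ncard_le_card T⟩ ⟨S, hS, rfl⟩

theorem ncard_le_bagAlpha {ι : Type} {bag : ι → Set V} {t : ι} (hSt : S ⊆ bag t)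
    (hS : IsIndepOn G S) : S.ncard ≤ bagAlpha G bag :=
  le_csSup ⟨Nat.card V, by rintro _ ⟨-, T, -, -, rfl⟩; exact ncard_le_card T⟩ ⟨t, S, hSt, hS, rfl⟩

theorem ncard_bag_lt_ramsey {ι : Type} {bag : ι → Set V} {k p : ℕ} (hk : bagAlpha G bag ≤ k)
    (hp : cliqueNumber G ≤ p) (t : ι) : (bag t).ncard < ramsey (p + 1) (k + 1) := by
  by_contra! h
  rcases exists_isClique_or_isIndepOn_of_ramsey_le G (toFinite _) h with
    ⟨S, -, hS, hcard⟩ | ⟨S, hSt, hS, hcard⟩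
  · have := ncard_le_cliqueNumber hS
    omega
  · have := ncard_le_bagAlpha hSt hS
    omega

end Bounds

theorem tdWidth_le_of_forall_ncard_bag_le {V : Type} {G : SimpleGraph V} {td : TreeDecomp G}
    {n : ℕ} (h : ∀ t, (td.bag t).ncard ≤ n) : tdWidth td ≤ n - 1 :=
  Nat.sub_le_sub_right (csSup_le' <| by rintro _ ⟨t, rfl⟩; exact h t) 1

theorem treewidth_le_tdWidth {V : Type} {G : SimpleGraph V} (td : TreeDecomp G) :
    treewidth G ≤ tdWidth td :=
  Nat.sInf_le ⟨td, rfl⟩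

theorem stmt0 {V : Type} [Fintype V] (G : SimpleGraph V) (k p : ℕ)
    (td : TreeDecomp G) (htd : tdAlpha td ≤ k) (hp : cliqueNumber G = p) :
    treewidth G ≤ ramsey (p + 1) (k + 1) - 2 := by
  have hbag : ∀ t, (td.bag t).ncard ≤ ramsey (p + 1) (k + 1) - 1 := fun t =>
    Nat.le_sub_one_of_lt (ncard_bag_lt_ramsey htd hp.le t)
  calc treewidth G ≤ tdWidth td := treewidth_le_tdWidth td
    _ ≤ ramsey (p + 1) (k + 1) - 1 - 1 := tdWidth_le_of_forall_ncard_bag_le hbag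
    _ = ramsey (p + 1) (k + 1) - 2 := by omega
end

section
/- Let G be a graph and let T be a tree decomposition of G. Then there exists a vertex v of G and a bag X_t of T such that the closed neighborhood N[v] is entirely contained in X_t. -/
open SimpleGraph

section Aux

open SimpleGraph Walk

variable {ι : Type} [DecidableEq ι] {T : SimpleGraph ι}

/-- In a tree, any path is a geodesic. -/
private lemma tree_path_length (hT : T.IsTree) {a b : ι} (p : T.Walk a b)
    (hp : p.IsPath) : p.length = T.dist a b := by
  obtain ⟨w, hw⟩ := (hT.isConnected a b).exists_walk_length_eq_dist
  have huniq := hT.existsUnique_path a b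
  have hpb : p = w.bypass := (huniq.unique hp w.bypass_isPath)
  have h1 : p.length ≤ T.dist a b := by
    rw [hpb, ← hw]; exact w.length_bypass_le
  exact le_antisymm h1 (SimpleGraph.dist_le p)

/-- In a tree, a path between two vertices of a connected set stays in the set. -/
private lemma tree_path_support_subset (hT : T.IsTree) {S : Set ι}
    (hS : (T.induce S).Connected) {a b : ι} (ha : a ∈ S) (hb : b ∈ S)
    (p : T.Walk a b) (hp : p.IsPath) : ∀ x ∈ p.support, x ∈ S := by
  obtain ⟨w⟩ := hS.preconnected ⟨a, ha⟩ ⟨b, hb⟩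
  have hw : ∀ x ∈ (w.map (SimpleGraph.Embedding.induce S).toHom).support, x ∈ S := by
    intro x hx
    rw [Walk.support_map] at hx
    obtain ⟨y, _, rfl⟩ := List.mem_map.mp hx
    exact y.2
  have : p = (w.map (SimpleGraph.Embedding.induce S).toHom).bypass :=
    (hT.existsUnique_path a b).unique hp (Walk.bypass_isPath _)
  intro x hx
  exact hw x (Walk.support_bypass_subset _ (this ▸ hx))

/-- Distance additivity along a path in a tree. -/
private lemma tree_dist_add (hT : T.IsTree) {a b x : ι} (p : T.Walk a b)
    (hp : p.IsPath) (hx : x ∈ p.support) : T.dist a b = T.dist a x + T.dist x b := by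
  have hspec := p.take_spec hx
  have hlen : p.length = (p.takeUntil x hx).length + (p.dropUntil x hx).length := by
    conv_lhs => rw [← hspec]
    exact Walk.length_append _ _
  rw [← tree_path_length hT p hp, hlen,
    tree_path_length hT _ (hp.takeUntil hx), tree_path_length hT _ (hp.dropUntil hx)]

/-- If `m` minimizes the distance to `r` over a connected set `S` containing `s`,
then `m` lies on the unique path from `s` to `r`. -/
private lemma min_mem_path (hT : T.IsTree) {S : Set ι} (hS : (T.induce S).Connected)
    {r s m : ι} (hs : s ∈ S) (hm : m ∈ S)
    (hmin : ∀ t ∈ S, T.dist r m ≤ T.dist r t)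
    (p : T.Walk s r) (hp : p.IsPath) : m ∈ p.support := by
  -- the unique paths s→m and m→r
  obtain ⟨q, hq, -⟩ := hT.existsUnique_path s m
  obtain ⟨q', hq', -⟩ := hT.existsUnique_path m r
  have hqS : ∀ x ∈ q.support, x ∈ S := tree_path_support_subset hT hS hs hm q hq
  -- any common vertex of q and q' is m
  have hint : ∀ x, x ∈ q.support → x ∈ q'.support → x = m := by
    intro x hxq hxq'
    have hxS : x ∈ S := hqS x hxq
    have hadd : T.dist m r = T.dist m x + T.dist x r := tree_dist_add hT q' hq' hxq'
    have h1 : T.dist r m ≤ T.dist r x := hmin x hxS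
    have hc1 : T.dist r m = T.dist m r := SimpleGraph.dist_comm
    have hc2 : T.dist r x = T.dist x r := SimpleGraph.dist_comm
    rw [hc1, hc2] at h1
    have h0 : T.dist m x = 0 := by omega
    have := ((hT.isConnected m x).dist_eq_zero_iff).mp h0
    exact this.symm
  -- q.append q' is a path
  have hpath : (q.append q').IsPath := by
    apply Walk.IsPath.mk'
    rw [Walk.support_append]
    apply List.Nodup.append hq.support_nodup
    · have := hq'.support_nodup
      rw [q'.support_eq_cons] at this
      exact this.of_cons
    · intro x hxq hxt
      have hxq' : x ∈ q'.support := List.mem_of_mem_tail hxt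
      have hxm : x = m := hint x hxq hxq'
      have := hq'.support_nodup
      rw [q'.support_eq_cons] at this
      exact (List.nodup_cons.mp this).1 (hxm ▸ hxt)
  have : p = q.append q' := (hT.existsUnique_path s r).unique hp hpath
  rw [this, Walk.mem_support_append_iff]
  exact Or.inl (Walk.end_mem_support q)

end Aux

theorem stmt2 {V : Type} [Fintype V] [Nonempty V] (G : SimpleGraph V)
    (td : TreeDecomp G) :
    ∃ (v : V) (t : td.ι), {u | u = v ∨ G.Adj v u} ⊆ td.bag t := by
  classical
  have hT := td.tree_isTree
  obtain ⟨r⟩ : Nonempty td.ι := hT.isConnected.nonempty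
  set T := td.tree with hTdef
  -- for each vertex choose a bag node closest to r
  have key : ∀ v : V, ∃ t, v ∈ td.bag t ∧
      ∀ t', v ∈ td.bag t' → T.dist r t ≤ T.dist r t' := by
    intro v
    have hne : {n | ∃ t, v ∈ td.bag t ∧ T.dist r t = n}.Nonempty := by
      obtain ⟨t, ht⟩ := td.mem_bag v; exact ⟨_, t, ht, rfl⟩
    obtain ⟨t, ht, hdt⟩ := Nat.sInf_mem hne
    exact ⟨t, ht, fun t' ht' => hdt ▸ Nat.sInf_le ⟨t', ht', rfl⟩⟩
  choose m hm hmin using key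
  obtain ⟨v, -, hv⟩ := Finset.exists_max_image Finset.univ
    (fun v => T.dist r (m v)) ⟨Classical.arbitrary V, Finset.mem_univ _⟩
  refine ⟨v, m v, ?_⟩
  rintro u (rfl | hadj)
  · exact hm _
  · -- u is a neighbor of v; find a bag containing both
    obtain ⟨s, hvs, hus⟩ := td.edge_bag hadj
    -- the unique path from s to r
    obtain ⟨p, hp, -⟩ := hT.existsUnique_path s r
    have hmv : m v ∈ p.support :=
      min_mem_path hT (td.bag_connected v) hvs (hm v)
        (fun t ht => hmin v t ht) p hp
    have hmu : m u ∈ p.support :=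
      min_mem_path hT (td.bag_connected u) hus (hm u)
        (fun t ht => hmin u t ht) p hp
    have hle : T.dist r (m u) ≤ T.dist r (m v) := hv u (Finset.mem_univ u)
    -- split p at m u
    have hspec := p.take_spec hmu
    have hmem : m v ∈ (p.takeUntil (m u) hmu).support ∨
        m v ∈ (p.dropUntil (m u) hmu).support := by
      rw [← Walk.mem_support_append_iff, hspec]; exact hmv
    rcases hmem with hmem | hmem
    · -- takeUntil is a path from s to m u, whose support lies in bag u
      exact tree_path_support_subset hT (td.bag_connected u) hus (hm u)
        _ (hp.takeUntil hmu) _ hmem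
    · -- m v lies on the path from m u to r, forcing m v = m u
      have hadd : T.dist (m u) r = T.dist (m u) (m v) + T.dist (m v) r :=
        tree_dist_add hT _ (hp.dropUntil hmu) hmem
      have hc1 : T.dist r (m u) = T.dist (m u) r := SimpleGraph.dist_comm
      have hc2 : T.dist r (m v) = T.dist (m v) r := SimpleGraph.dist_comm
      rw [hc1, hc2] at hle
      have h0 : T.dist (m u) (m v) = 0 := by omega
      have heq : m u = m v := ((hT.isConnected (m u) (m v)).dist_eq_zero_iff).mp h0
      exact heq ▸ hm u
end

section
/- For every integer k ≥ 3, the graph G obtained from the complete graph on vertex set S = {1,...,k} by replacing each edge ij with k internally disjoint paths of length two connecting i and j satisfies tw(G) = k − 1 and tree-independence number of G equal to k. -/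
open SimpleGraph

/-- The graph obtained from the complete graph on `Fin k` by replacing each edge `ij`
with `k` internally disjoint paths of length two connecting `i` and `j`:
for every non-diagonal unordered pair `p` of elements of `Fin k` there are `k`
middle vertices, each adjacent exactly to the two elements of `p`. -/
def multiPathGraph (k : ℕ) :
    SimpleGraph (Fin k ⊕ ({p : Sym2 (Fin k) // ¬ p.IsDiag} × Fin k)) :=
  SimpleGraph.fromRel fun x y =>
    match x, y with
    | .inl i, .inr m => i ∈ m.1.1
    | _, _ => False

/-!
The star decomposition, with central bag `Fin k` and one bag `{i, j, m}` for every middle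
vertex `m` of a pair `{i, j}`, has bags of size at most `k` and gives both upper bounds.

For the lower bounds, consider the subtrees of an arbitrary tree decomposition on which the
vertices `i ∈ Fin k` live. If they pairwise meet, the Helly property of subtrees puts all of
`Fin k` into one bag. Otherwise the subtrees of some `i` and `j` are disjoint; the subtree of
each middle vertex of `{i, j}` meets both of them, so any two of these subtrees meet, and
Helly puts all `k` middle vertices into one bag. In both cases a bag contains an independent
set of size `k`.
-/

namespace SimpleGraph

variable {ι : Type*} {T : SimpleGraph ι} {S S₁ S₂ S₃ : Set ι} {x y : ι}

lemma IsAcyclic.support_subset_of_isPath (hT : T.IsAcyclic) {p : T.Walk x y} (hp : p.IsPath)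
    (q : T.Walk x y) : p.support ⊆ q.support := by
  classical
  have : p = q.bypass := congrArg Subtype.val <|
    (hT.subsingleton_path x y).elim ⟨p, hp⟩ ⟨q.bypass, q.bypass_isPath⟩
  exact this ▸ q.support_bypass_subset_support

lemma IsAcyclic.support_subset_of_connected_induce (hT : T.IsAcyclic)
    (hS : (T.induce S).Connected) {p : T.Walk x y} (hp : p.IsPath) (hx : x ∈ S) (hy : y ∈ S) :
    ∀ z ∈ p.support, z ∈ S := by
  obtain ⟨q⟩ := hS.preconnected ⟨x, hx⟩ ⟨y, hy⟩
  intro z hz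
  obtain ⟨⟨z, hzS⟩, -, rfl⟩ := List.mem_map.1 <|
    (q.support_map (Embedding.induce S).toHom) ▸ hT.support_subset_of_isPath hp _ hz
  exact hzS

lemma IsAcyclic.exists_isPath_of_connected_induce (hT : T.IsAcyclic)
    (hS : (T.induce S).Connected) (hx : x ∈ S) (hy : y ∈ S) :
    ∃ p : T.Walk x y, p.IsPath ∧ ∀ z ∈ p.support, z ∈ S := by
  obtain ⟨p, hp⟩ := ((hS ⟨x, hx⟩ ⟨y, hy⟩).map (Embedding.induce S).toHom).exists_isPath
  exact ⟨p, hp, hT.support_subset_of_connected_induce hS hp hx hy⟩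

lemma IsAcyclic.connected_induce_inter (hT : T.IsAcyclic) (h₁ : (T.induce S₁).Connected)
    (h₂ : (T.induce S₂).Connected) (h : (S₁ ∩ S₂).Nonempty) :
    (T.induce (S₁ ∩ S₂)).Connected := by
  obtain ⟨c, hc⟩ := h
  refine induce_connected_of_patches c hc fun {v} hv => ?_
  obtain ⟨p, hp, hpS₁⟩ := hT.exists_isPath_of_connected_induce h₁ hc.1 hv.1
  have hpS₂ := hT.support_subset_of_connected_induce h₂ hp hc.2 hv.2
  exact ⟨{z | z ∈ p.support}, fun z hz => ⟨hpS₁ z hz, hpS₂ z hz⟩, p.start_mem_support,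
    p.end_mem_support, p.connected_induce_support _ _⟩

lemma IsAcyclic.helly_three (hT : T.IsAcyclic) (h₁ : (T.induce S₁).Connected)
    (h₂ : (T.induce S₂).Connected) (h₃ : (T.induce S₃).Connected)
    (h₁₂ : (S₁ ∩ S₂).Nonempty) (h₂₃ : (S₂ ∩ S₃).Nonempty) (h₁₃ : (S₁ ∩ S₃).Nonempty) :
    (S₁ ∩ S₂ ∩ S₃).Nonempty := by
  obtain ⟨x, hx₁, hx₂⟩ := h₁₂
  obtain ⟨y, hy₂, hy₃⟩ := h₂₃
  obtain ⟨z, hz₁, hz₃⟩ := h₁₃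
  by_cases hz₂ : z ∈ S₂
  · exact ⟨z, ⟨hz₁, hz₂⟩, hz₃⟩
  obtain ⟨p, hp, hpS₁⟩ := hT.exists_isPath_of_connected_induce h₁ hx₁ hz₁
  obtain ⟨q, -, hqS₂⟩ := hT.exists_isPath_of_connected_induce h₂ hx₂ hy₂
  obtain ⟨r, -, hrS₃⟩ := hT.exists_isPath_of_connected_induce h₃ hy₃ hz₃
  obtain ⟨d, hd, hd₂, hd₂'⟩ := p.exists_boundary_dart S₂ hx₂ hz₂
  have hd₃ : d.snd ∈ S₃ := by
    have := hT.support_subset_of_isPath hp (q.append r) (p.dart_snd_mem_support_of_mem_darts hd)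
    rcases (Walk.mem_support_append_iff _ _).1 this with h | h
    · exact absurd (hqS₂ _ h) hd₂'
    · exact hrS₃ _ h
  -- The path from `y` to `d.fst` stays in `S₂`, so it avoids `d.snd`; hence the path from `y`
  -- to `d.snd`, which stays in `S₃`, passes through `d.fst`.
  obtain ⟨a, ha, haS₂⟩ := hT.exists_isPath_of_connected_induce h₂ hy₂ hd₂
  obtain ⟨b, hb, hbS₃⟩ := hT.exists_isPath_of_connected_induce h₃ hy₃ hd₃
  have := hT.mem_support_of_ne_mem_support_of_adj_of_isPath hb ha d.adj.symm
    (fun h => hd₂' (haS₂ _ h))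
  exact ⟨d.fst, ⟨hpS₁ _ (p.dart_fst_mem_support_of_mem_darts hd), hd₂⟩, hbS₃ _ this⟩

lemma IsAcyclic.helly {κ : Type*} (hT : T.IsAcyclic) (f : κ → Set ι) {s : Finset κ}
    (hs : s.Nonempty) (hconn : ∀ i ∈ s, (T.induce (f i)).Connected)
    (hpair : ∀ i ∈ s, ∀ j ∈ s, (f i ∩ f j).Nonempty) : (⋂ i ∈ s, f i).Nonempty := by
  induction hs using Finset.Nonempty.cons_induction generalizing f with
  | singleton a => simpa using hpair a (by simp) a (by simp)
  | cons a s ha hs ih =>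
    simp only [Finset.mem_cons, forall_eq_or_imp] at hconn hpair
    obtain ⟨x, hx⟩ := ih (fun i => f i ∩ f a)
      (fun i hi => hT.connected_induce_inter (hconn.2 i hi) hconn.1 (hpair.2 i hi).1)
      (fun i hi j hj => by
        obtain ⟨c, ⟨hci, hcj⟩, hca⟩ := hT.helly_three (hconn.2 i hi) (hconn.2 j hj) hconn.1
          ((hpair.2 i hi).2 j hj) (hpair.2 j hj).1 (hpair.2 i hi).1
        exact ⟨c, ⟨hci, hca⟩, hcj, hca⟩)
    simp only [Set.mem_iInter] at hx
    obtain ⟨i, hi⟩ := hs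
    refine ⟨x, ?_⟩
    simp only [Finset.mem_cons, Set.mem_iInter, forall_eq_or_imp]
    exact ⟨(hx i hi).2, fun j hj => (hx j hj).1⟩

lemma IsAcyclic.inter_nonempty_of_meet_disjoint (hT : T.IsAcyclic) {A B C D : Set ι}
    (hA : (T.induce A).Connected) (hB : (T.induce B).Connected) (hC : (T.induce C).Connected)
    (hD : (T.induce D).Connected) (hAB : Disjoint A B) (hCA : (C ∩ A).Nonempty)
    (hCB : (C ∩ B).Nonempty) (hDA : (D ∩ A).Nonempty) (hDB : (D ∩ B).Nonempty) :
    (C ∩ D).Nonempty := by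
  obtain ⟨x, ⟨hxA, hxC⟩, hxDB⟩ := hT.helly_three hA hC
    (induce_union_connected hD.preconnected hB.preconnected hDB)
    (by rwa [Set.inter_comm]) (hCB.mono (Set.inter_subset_inter_right _ Set.subset_union_right))
    ((Set.inter_comm D A ▸ hDA).mono (Set.inter_subset_inter_right _ Set.subset_union_left))
  exact ⟨x, hxC, hxDB.resolve_right (Set.disjoint_left.1 hAB hxA)⟩

end SimpleGraph

namespace TreeDecomp

variable {V : Type} {G : SimpleGraph V} (td : TreeDecomp G)

lemma exists_bag_superset {A : Set V} (hA : A.Finite)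
    (h : ∀ u ∈ A, ∀ v ∈ A, ∃ t, u ∈ td.bag t ∧ v ∈ td.bag t) : ∃ t, A ⊆ td.bag t := by
  lift A to Finset V using hA
  rcases A.eq_empty_or_nonempty with rfl | hA
  · obtain ⟨t⟩ := td.tree_isTree.1.nonempty
    exact ⟨t, by simp⟩
  obtain ⟨t, ht⟩ := td.tree_isTree.2.helly (fun v => {t | v ∈ td.bag t}) hA
    (fun v _ => td.bag_connected v) h
  exact ⟨t, fun v hv => Set.mem_iInter₂.1 ht v hv⟩

lemma exists_bag_superset_of_subset_commonNeighbors {u v : V}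
    (huv : ∀ t, u ∈ td.bag t → v ∉ td.bag t) {A : Set V} (hA : A.Finite)
    (hAuv : A ⊆ G.commonNeighbors u v) : ∃ t, A ⊆ td.bag t := by
  refine td.exists_bag_superset hA fun a ha b hb => ?_
  obtain ⟨hua, hva⟩ := G.mem_commonNeighbors.1 (hAuv ha)
  obtain ⟨hub, hvb⟩ := G.mem_commonNeighbors.1 (hAuv hb)
  have hmeet : ∀ {w x : V}, G.Adj w x → ({t | x ∈ td.bag t} ∩ {t | w ∈ td.bag t}).Nonempty :=
    fun hwx => (td.edge_bag hwx).imp fun _ ht => ht.symm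
  exact td.tree_isTree.2.inter_nonempty_of_meet_disjoint (td.bag_connected u)
    (td.bag_connected v) (td.bag_connected a) (td.bag_connected b) (Set.disjoint_left.2 huv)
    (hmeet hua) (hmeet hva) (hmeet hub) (hmeet hvb)

lemma ncard_le_tdAlpha [Finite V] {t : td.ι} {S : Set V} (hS : S ⊆ td.bag t)
    (hind : IsIndepOn G S) : S.ncard ≤ tdAlpha td := by
  apply le_csSup
  · exact ⟨Nat.card V, by rintro _ ⟨-, S', -, -, rfl⟩; exact S'.ncard_le_card⟩
  · exact ⟨t, S, hS, hind, rfl⟩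

lemma ncard_bag_sub_one_le_tdWidth [Finite V] (t : td.ι) :
    (td.bag t).ncard - 1 ≤ tdWidth td := by
  apply Nat.sub_le_sub_right
  apply le_csSup
  · exact ⟨Nat.card V, by rintro _ ⟨-, rfl⟩; exact Set.ncard_le_card _⟩
  · exact ⟨t, rfl⟩

lemma tdAlpha_le_of_ncard_bag_le [Finite V] {n : ℕ} (h : ∀ t, (td.bag t).ncard ≤ n) :
    tdAlpha td ≤ n := by
  apply csSup_le'
  rintro _ ⟨t, S, hS, -, rfl⟩
  exact (Set.ncard_le_ncard hS).trans (h t)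

lemma tdWidth_le_of_ncard_bag_le {n : ℕ} (h : ∀ t, (td.bag t).ncard ≤ n) :
    tdWidth td ≤ n - 1 := by
  apply Nat.sub_le_sub_right
  apply csSup_le'
  rintro _ ⟨t, rfl⟩
  exact h t

end TreeDecomp

section

variable {V : Type} {G : SimpleGraph V} {n : ℕ}

lemma treewidth_eq_of_le_of_forall_le (D : TreeDecomp G) (hD : tdWidth D ≤ n)
    (h : ∀ td : TreeDecomp G, n ≤ tdWidth td) : treewidth G = n := by
  refine le_antisymm (le_trans ?_ hD) ?_
  · exact Nat.sInf_le ⟨D, rfl⟩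
  · exact le_csInf ⟨_, D, rfl⟩ fun _ ⟨td, htd⟩ => htd ▸ h td

lemma treeIndepNum_eq_of_le_of_forall_le (D : TreeDecomp G) (hD : tdAlpha D ≤ n)
    (h : ∀ td : TreeDecomp G, n ≤ tdAlpha td) : treeIndepNum G = n := by
  refine le_antisymm (le_trans ?_ hD) ?_
  · exact Nat.sInf_le ⟨D, rfl⟩
  · exact le_csInf ⟨_, D, rfl⟩ fun _ ⟨td, htd⟩ => htd ▸ h td

end

section multiPathGraph

variable {k : ℕ}

lemma multiPathGraph_adj_inl_inr (i : Fin k) (m : {p : Sym2 (Fin k) // ¬ p.IsDiag} × Fin k) :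
    (multiPathGraph k).Adj (.inl i) (.inr m) ↔ i ∈ m.1.1 := by
  simp [multiPathGraph]

lemma multiPathGraph_not_adj_inl (i j : Fin k) : ¬ (multiPathGraph k).Adj (.inl i) (.inl j) := by
  simp [multiPathGraph]

lemma multiPathGraph_not_adj_inr (m m' : {p : Sym2 (Fin k) // ¬ p.IsDiag} × Fin k) :
    ¬ (multiPathGraph k).Adj (.inr m) (.inr m') := by
  simp [multiPathGraph]

lemma isIndepOn_multiPathGraph_range_inl : IsIndepOn (multiPathGraph k) (Set.range Sum.inl) := by
  rintro _ ⟨i, rfl⟩ _ ⟨j, rfl⟩ -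
  exact multiPathGraph_not_adj_inl i j

lemma isIndepOn_multiPathGraph_of_subset_range_inr
    {S : Set (Fin k ⊕ ({p : Sym2 (Fin k) // ¬ p.IsDiag} × Fin k))} (hS : S ⊆ Set.range Sum.inr) :
    IsIndepOn (multiPathGraph k) S := by
  intro _ hx _ hy _
  obtain ⟨m, rfl⟩ := hS hx
  obtain ⟨m', rfl⟩ := hS hy
  exact multiPathGraph_not_adj_inr _ _

lemma multiPathGraph_exists_indep_subset_bag (td : TreeDecomp (multiPathGraph k)) :
    ∃ t, ∃ S, S ⊆ td.bag t ∧ IsIndepOn (multiPathGraph k) S ∧ S.ncard = k := by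
  by_cases h : ∀ i j : Fin k, ∃ t, .inl i ∈ td.bag t ∧ .inl j ∈ td.bag t
  · obtain ⟨t, ht⟩ := td.exists_bag_superset (Set.finite_range Sum.inl)
      (by rintro _ ⟨i, rfl⟩ _ ⟨j, rfl⟩; exact h i j)
    exact ⟨t, _, ht, isIndepOn_multiPathGraph_range_inl, by
      simp [Set.ncard_range_of_injective Sum.inl_injective]⟩
  push Not at h
  obtain ⟨i, j, hij⟩ := h
  have hne : i ≠ j := by
    rintro rfl
    obtain ⟨t, ht⟩ := td.mem_bag (.inl i)
    exact hij t ht ht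
  let p : {p : Sym2 (Fin k) // ¬ p.IsDiag} := ⟨s(i, j), by simpa using hne⟩
  let mid : Fin k → Fin k ⊕ ({p : Sym2 (Fin k) // ¬ p.IsDiag} × Fin k) := fun l => .inr (p, l)
  have hmid : Function.Injective mid := fun l l' h => by simpa [mid] using h
  obtain ⟨t, ht⟩ := td.exists_bag_superset_of_subset_commonNeighbors hij (Set.finite_range mid)
    (by
      rintro _ ⟨l, rfl⟩
      simp [mem_commonNeighbors, multiPathGraph_adj_inl_inr, mid, p])
  exact ⟨t, _, ht,
    isIndepOn_multiPathGraph_of_subset_range_inr (Set.range_subset_iff.2 fun l => ⟨(p, l), rfl⟩),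
    by simp [Set.ncard_range_of_injective hmid]⟩

lemma le_tdAlpha_multiPathGraph (td : TreeDecomp (multiPathGraph k)) : k ≤ tdAlpha td := by
  obtain ⟨t, S, hS, hind, hcard⟩ := multiPathGraph_exists_indep_subset_bag td
  exact hcard.symm.le.trans (td.ncard_le_tdAlpha hS hind)

lemma sub_one_le_tdWidth_multiPathGraph (td : TreeDecomp (multiPathGraph k)) :
    k - 1 ≤ tdWidth td := by
  obtain ⟨t, S, hS, -, hcard⟩ := multiPathGraph_exists_indep_subset_bag td
  calc k - 1 = S.ncard - 1 := by rw [hcard]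
    _ ≤ (td.bag t).ncard - 1 := Nat.sub_le_sub_right (Set.ncard_le_ncard hS) 1
    _ ≤ tdWidth td := td.ncard_bag_sub_one_le_tdWidth t

variable (k)

def multiPathGraph.starBag :
    Option ({p : Sym2 (Fin k) // ¬ p.IsDiag} × Fin k) →
      Set (Fin k ⊕ ({p : Sym2 (Fin k) // ¬ p.IsDiag} × Fin k))
  | none => Set.range Sum.inl
  | some m => insert (.inr m) (Sum.inl '' ↑m.1.1.toFinset)

def multiPathGraph.starDecomp : TreeDecomp (multiPathGraph k) where
  ι := Option ({p : Sym2 (Fin k) // ¬ p.IsDiag} × Fin k)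
  tree := starGraph none
  tree_isTree := isTree_starGraph none
  bag := starBag k
  mem_bag
    | .inl i => ⟨none, i, rfl⟩
    | .inr m => ⟨some m, Set.mem_insert _ _⟩
  edge_bag u v h := by
    rcases u with i | m <;> rcases v with j | m'
    · exact absurd h (multiPathGraph_not_adj_inl i j)
    · exact ⟨some m', by simpa [starBag] using (multiPathGraph_adj_inl_inr i m').1 h⟩
    · exact ⟨some m, by simpa [starBag] using (multiPathGraph_adj_inl_inr j m).1 h.symm⟩
    · exact absurd h (multiPathGraph_not_adj_inr m m')
  bag_connected v := by
    -- In both cases some node is adjacent in `starGraph none` to every other node of the set: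
    -- the centre `none` for `inl i`, and the only node `some m` for `inr m`.
    rcases v with i | m
    · exact Connected.of_isUniversal (v := ⟨none, i, rfl⟩) fun w hw => by
        simpa [Subtype.ext_iff] using hw
    · refine Connected.of_isUniversal (v := ⟨some m, Set.mem_insert _ _⟩) fun w hw => ?_
      obtain ⟨_ | m', hm'⟩ := w
      · simp [starBag] at hm'
      · obtain rfl : m = m' := by simpa [starBag, eq_comm] using hm'
        exact absurd rfl hw

lemma multiPathGraph.ncard_starBag_le (hk : 3 ≤ k) (t) : (starBag k t).ncard ≤ k := by
  rcases t with _ | ⟨⟨p, hp⟩, l⟩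
  · simp [starBag, Set.ncard_range_of_injective Sum.inl_injective]
  · calc (starBag k (some (⟨p, hp⟩, l))).ncard
        ≤ (Sum.inl '' (p.toFinset : Set (Fin k))).ncard + 1 := Set.ncard_insert_le _ _
      _ ≤ p.toFinset.card + 1 := by grw [Set.ncard_image_le, Set.ncard_coe_finset]
      _ ≤ k := by rw [Sym2.card_toFinset_of_not_isDiag p hp]; omega

end multiPathGraph

theorem stmt8 (k : ℕ) (hk : 3 ≤ k) :
    treewidth (multiPathGraph k) = k - 1 ∧ treeIndepNum (multiPathGraph k) = k := by
  let D := multiPathGraph.starDecomp k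
  have hD : ∀ t, (D.bag t).ncard ≤ k := multiPathGraph.ncard_starBag_le k hk
  exact ⟨treewidth_eq_of_le_of_forall_le D (D.tdWidth_le_of_ncard_bag_le hD)
      sub_one_le_tdWidth_multiPathGraph,
    treeIndepNum_eq_of_le_of_forall_le D (D.tdAlpha_le_of_ncard_bag_le hD)
      le_tdAlpha_multiPathGraph⟩
end

section
/- If G' is obtained from a graph G by contracting an edge e = uv, then the tree-independence number of G' is at most the tree-independence number of G. Consequently, if G' is an induced minor of G (obtained by vertex deletions and edge contractions), then tree-α(G') ≤ tree-α(G). -/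
open SimpleGraph

/-- The graph obtained from `G` by contracting the edge `uv`: the vertex `v` is
removed and the new vertex resulting from the contraction is identified with `u`,
which becomes adjacent to every vertex that was adjacent to `u` or to `v`. -/
def contractEdge {V : Type} (G : SimpleGraph V) (u v : V) :
    SimpleGraph {x : V // x ≠ v} :=
  SimpleGraph.fromRel fun a b =>
    G.Adj a b ∨ (a.1 = u ∧ G.Adj v b.1) ∨ (b.1 = u ∧ G.Adj a.1 v)

/-- `G'` is an induced minor of `G`: there are disjoint nonempty connected branch sets
in `G`, one for each vertex of `G'`, such that adjacency in `G'` corresponds exactly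
to the existence of an edge of `G` between the branch sets. -/
def IsInducedMinor {V W : Type} (G : SimpleGraph V) (G' : SimpleGraph W) : Prop :=
  ∃ B : W → Set V,
    (∀ i, (B i).Nonempty) ∧
    (∀ i, (G.induce (B i)).Connected) ∧
    (∀ i j, i ≠ j → Disjoint (B i) (B j)) ∧
    (∀ i j, i ≠ j → (G'.Adj i j ↔ ∃ a ∈ B i, ∃ b ∈ B j, G.Adj a b))

/-!
A tree decomposition of `G` induces one of any induced minor `G'` with branch sets `B i`: put `i`
into every bag meeting `B i`. The bags containing `i` form a connected subtree because `B i` is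
connected and adjacent vertices of `G` share a bag. An independent set of `G'` inside a bag lifts,
by picking in each branch set one vertex of that bag, to an independent set of `G` of the same
size in the same bag, since branch sets are disjoint and an edge between them would be an edge of
`G'`. Contracting an edge `uv` is the induced minor whose branch sets are `{u, v}` and singletons.
-/

section ConnectedUnion

variable {ι V : Type} {T : SimpleGraph ι} {G : SimpleGraph V}

theorem SimpleGraph.connected_induce_biUnion {A : Set V} (hA : (G.induce A).Connected)
    {S : V → Set ι} (hS : ∀ a ∈ A, (T.induce (S a)).Connected)
    (hadj : ∀ a ∈ A, ∀ b ∈ A, G.Adj a b → (S a ∩ S b).Nonempty) :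
    (T.induce (⋃ a ∈ A, S a)).Connected := by
  have hsub : ∀ a ∈ A, S a ⊆ ⋃ a ∈ A, S a := fun a ha => Set.subset_biUnion_of_mem ha
  have reach_of_walk : ∀ {a b : A}, (G.induce A).Walk a b → ∀ x (hx : x ∈ S a) y (hy : y ∈ S b),
      (T.induce (⋃ a ∈ A, S a)).Reachable ⟨x, hsub a a.2 hx⟩ ⟨y, hsub b b.2 hy⟩ := by
    intro a b p
    induction p with
    | @nil a =>
      intro x hx y hy
      exact ((hS _ a.2).preconnected ⟨x, hx⟩ ⟨y, hy⟩).map (T.induceHomOfLE (hsub _ a.2)).toHom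
    | @cons a c b hac p ih =>
      intro x hx y hy
      obtain ⟨z, hza, hzc⟩ := hadj a a.2 c c.2 hac
      exact (((hS _ a.2).preconnected ⟨x, hx⟩ ⟨z, hza⟩).map
        (T.induceHomOfLE (hsub _ a.2)).toHom).trans (ih z hzc y hy)
  obtain ⟨a₀⟩ := hA.nonempty
  obtain ⟨⟨z₀, hz₀⟩⟩ := (hS a₀ a₀.2).nonempty
  rw [connected_iff_exists_forall_reachable]
  refine ⟨⟨z₀, hsub a₀ a₀.2 hz₀⟩, fun ⟨y, hy⟩ => ?_⟩
  obtain ⟨b, hb, hyb⟩ := Set.mem_iUnion₂.mp hy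
  exact reach_of_walk (hA.preconnected a₀ ⟨b, hb⟩).some z₀ hz₀ y hyb

end ConnectedUnion

section TreeIndepNum

variable {V W : Type} {G : SimpleGraph V} {G' : SimpleGraph W}

def TreeDecomp.trivial (G : SimpleGraph V) : TreeDecomp G where
  ι := Unit
  tree := ⊥
  tree_isTree :=
    ⟨(connected_iff_exists_forall_reachable _).mpr ⟨(), fun _ => .rfl⟩, isAcyclic_bot⟩
  bag _ := Set.univ
  mem_bag v := ⟨(), Set.mem_univ v⟩
  edge_bag u v _ := ⟨(), Set.mem_univ u, Set.mem_univ v⟩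
  bag_connected v :=
    (connected_iff_exists_forall_reachable _).mpr ⟨⟨(), Set.mem_univ v⟩, fun _ => .rfl⟩

theorem treeIndepNum_le_tdAlpha (td : TreeDecomp G) : treeIndepNum G ≤ tdAlpha td :=
  Nat.sInf_le ⟨td, rfl⟩

theorem exists_tdAlpha_eq_treeIndepNum (G : SimpleGraph V) :
    ∃ td : TreeDecomp G, tdAlpha td = treeIndepNum G :=
  Nat.sInf_mem (s := {k | ∃ td : TreeDecomp G, tdAlpha td = k}) ⟨_, TreeDecomp.trivial G, rfl⟩

def TreeDecomp.ofBranchSets (td : TreeDecomp G) (B : W → Set V) (hne : ∀ i, (B i).Nonempty)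
    (hconn : ∀ i, (G.induce (B i)).Connected)
    (hadj : ∀ ⦃i j⦄, G'.Adj i j → ∃ a ∈ B i, ∃ b ∈ B j, G.Adj a b) : TreeDecomp G' where
  ι := td.ι
  tree := td.tree
  tree_isTree := td.tree_isTree
  bag t := {i | (B i ∩ td.bag t).Nonempty}
  mem_bag i := by
    obtain ⟨a, ha⟩ := hne i
    obtain ⟨t, ht⟩ := td.mem_bag a
    exact ⟨t, a, ha, ht⟩
  edge_bag i j hij := by
    obtain ⟨a, ha, b, hb, hab⟩ := hadj hij
    obtain ⟨t, hat, hbt⟩ := td.edge_bag hab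
    exact ⟨t, ⟨a, ha, hat⟩, ⟨b, hb, hbt⟩⟩
  bag_connected i := by
    have hbags : {t | i ∈ {i | (B i ∩ td.bag t).Nonempty}} = ⋃ a ∈ B i, {t | a ∈ td.bag t} := by
      ext t
      simp [Set.Nonempty]
    rw [hbags]
    exact connected_induce_biUnion (hconn i) (fun a _ => td.bag_connected a)
      fun a _ b _ hab => td.edge_bag hab

theorem bagAlpha_le_bagAlpha [Finite V] {ι' ι : Type} {bag' : ι' → Set W} {bag : ι → Set V}
    (h : ∀ t S', S' ⊆ bag' t → IsIndepOn G' S' →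
      ∃ s S, S ⊆ bag s ∧ IsIndepOn G S ∧ S.ncard = S'.ncard) :
    bagAlpha G' bag' ≤ bagAlpha G bag := by
  refine csSup_le_csSup' ⟨Nat.card V, ?_⟩ ?_
  · rintro _ ⟨-, S, -, -, rfl⟩
    exact Set.ncard_le_card S
  · rintro _ ⟨t, S', hS', hind, rfl⟩
    exact h t S' hS' hind

theorem tdAlpha_ofBranchSets_le [Finite V] (td : TreeDecomp G) (B : W → Set V)
    (hne : ∀ i, (B i).Nonempty) (hconn : ∀ i, (G.induce (B i)).Connected)
    (hdisj : ∀ i j, i ≠ j → Disjoint (B i) (B j))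
    (hadj : ∀ i j, i ≠ j → (G'.Adj i j ↔ ∃ a ∈ B i, ∃ b ∈ B j, G.Adj a b)) :
    tdAlpha (td.ofBranchSets B hne hconn fun i j hij => (hadj i j hij.ne).mp hij) ≤
      tdAlpha td := by
  refine bagAlpha_le_bagAlpha fun t S' hS' hind => ?_
  have hpick : ∀ i, ∃ a ∈ B i, i ∈ S' → a ∈ td.bag t := by
    intro i
    by_cases hi : i ∈ S'
    · obtain ⟨a, haB, hat⟩ := hS' hi
      exact ⟨a, haB, fun _ => hat⟩
    · obtain ⟨a, haB⟩ := hne i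
      exact ⟨a, haB, fun hi' => absurd hi' hi⟩
  choose f hfB hft using hpick
  have hinj : S'.InjOn f := fun i _ j _ hij =>
    by_contra fun hne => (hdisj i j hne).ne_of_mem (hfB i) (hfB j) hij
  refine ⟨t, f '' S', Set.image_subset_iff.mpr hft, ?_, hinj.ncard_image⟩
  rintro _ ⟨i, hi, rfl⟩ _ ⟨j, hj, rfl⟩ hfij hadjG
  have hij : i ≠ j := fun h => hfij (congrArg f h)
  exact hind hi hj hij ((hadj i j hij).mpr ⟨f i, hfB i, f j, hfB j, hadjG⟩)

theorem treeIndepNum_le_of_isInducedMinor [Finite V] (h : IsInducedMinor G G') :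
    treeIndepNum G' ≤ treeIndepNum G := by
  obtain ⟨B, hne, hconn, hdisj, hadj⟩ := h
  obtain ⟨td, htd⟩ := exists_tdAlpha_eq_treeIndepNum G
  calc treeIndepNum G' ≤ tdAlpha (td.ofBranchSets B hne hconn _) := treeIndepNum_le_tdAlpha _
    _ ≤ tdAlpha td := tdAlpha_ofBranchSets_le td B hne hconn hdisj hadj
    _ = treeIndepNum G := htd

end TreeIndepNum

section Contraction

variable {V W : Type} {G : SimpleGraph V}

theorem SimpleGraph.connected_induce_of_forall_adj {S : Set V} {c : V} (hc : c ∈ S)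
    (hS : ∀ x ∈ S, x ≠ c → G.Adj c x) : (G.induce S).Connected := by
  refine (connected_iff_exists_forall_reachable _).mpr ⟨⟨c, hc⟩, fun ⟨x, hx⟩ => ?_⟩
  by_cases hxc : x = c
  · subst hxc
    rfl
  · exact Adj.reachable (hS x hx hxc)

theorem isInducedMinor_of_surjective {G' : SimpleGraph W} (f : V → W)
    (hf : Function.Surjective f) (hconn : ∀ i, (G.induce (f ⁻¹' {i})).Connected)
    (hadj : ∀ i j, i ≠ j → (G'.Adj i j ↔ ∃ a b, f a = i ∧ f b = j ∧ G.Adj a b)) :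
    IsInducedMinor G G' := by
  refine ⟨fun i => f ⁻¹' {i}, fun i => ?_, hconn, fun i j hij => ?_, fun i j hij => ?_⟩
  · obtain ⟨a, rfl⟩ := hf i
    exact ⟨a, rfl⟩
  · exact (Set.disjoint_singleton.mpr hij).preimage f
  · simpa only [Set.mem_preimage, Set.mem_singleton_iff, exists_prop, exists_and_left]
      using hadj i j hij

open Classical in
noncomputable def contractEdgeMap {u v : V} (huv : u ≠ v) (x : V) : {x : V // x ≠ v} :=
  if h : x = v then ⟨u, huv⟩ else ⟨x, h⟩

theorem contractEdgeMap_eq_iff {u v : V} (huv : u ≠ v) {x : V} {i : {x : V // x ≠ v}} :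
    contractEdgeMap huv x = i ↔ x = i ∨ x = v ∧ (i : V) = u := by
  unfold contractEdgeMap
  split_ifs with h <;> grind

theorem isInducedMinor_contractEdge {u v : V} (huv : G.Adj u v) :
    IsInducedMinor G (contractEdge G u v) := by
  refine isInducedMinor_of_surjective (contractEdgeMap huv.ne) (fun i => ⟨i, ?_⟩)
    (fun i => connected_induce_of_forall_adj (c := i) ?_ fun x hx hxi => ?_) fun i j hij => ?_
  · simp [contractEdgeMap_eq_iff]
  · simp [contractEdgeMap_eq_iff]
  · simp only [Set.mem_preimage, Set.mem_singleton_iff, contractEdgeMap_eq_iff] at hx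
    obtain ⟨rfl, hiu⟩ := hx.resolve_left hxi
    exact hiu ▸ huv
  · simp only [contractEdge, fromRel_adj, ne_eq, hij, not_false_eq_true, true_and,
      contractEdgeMap_eq_iff, or_and_right, exists_or, exists_and_left, exists_eq_left]
    grind [SimpleGraph.adj_comm]

end Contraction

theorem stmt11 {V : Type} [Fintype V] :
    (∀ (G : SimpleGraph V) (u v : V), G.Adj u v →
      treeIndepNum (contractEdge G u v) ≤ treeIndepNum G) ∧
    (∀ (W : Type) [Fintype W] (G : SimpleGraph V) (G' : SimpleGraph W),
      IsInducedMinor G G' → treeIndepNum G' ≤ treeIndepNum G) :=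
  ⟨fun _ _ _ huv => treeIndepNum_le_of_isInducedMinor (isInducedMinor_contractEdge huv),
    fun _ _ _ _ => treeIndepNum_le_of_isInducedMinor⟩
end

section
/- Let C be a clique cutset in a graph G with cut-partition (A, B, C), and let G_A = G[A ∪ C], G_B = G[B ∪ C]. Given tree decompositions T_A of G_A and T_B of G_B, one can combine them (by connecting a bag of T_A containing C to a bag of T_B containing C) into a tree decomposition T of G with independence number α(T) = max{α(T_A), α(T_B)}. -/
open SimpleGraph

/-!
Glue the two decomposition trees by a new edge between a bag of `T_A` and a bag of `T_B` that
both contain `C`. Such bags exist because the bags containing a fixed vertex form a subtree, the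
subtrees of the vertices of a clique pairwise intersect, and pairwise intersecting subtrees of a
tree have a common vertex (Helly property, proved through medians of triples). Since `A` and `B`
are disjoint, a vertex occurs in bags on both sides only if it lies in `C`, and then it lies in
both ends of the new edge, so its bags still form a subtree. The glued decomposition has exactly
the bags of `T_A` and `T_B`, hence the larger of the two independence numbers.
-/

namespace SimpleGraph

variable {V W : Type*} {G : SimpleGraph V} {H : SimpleGraph W}

lemma IsAcyclic.not_isCycle_sum_inl (hG : G.IsAcyclic) {x : V}
    (c : (G ⊕g H).Walk (.inl x) (.inl x)) : ¬ c.IsCycle := by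
  classical
  intro hc
  have hsupp : ∀ z ∈ c.support, z ∈ Set.range Sum.inl := by
    rintro (z | z) hz
    · exact ⟨z, rfl⟩
    · exact absurd ⟨c.takeUntil _ hz⟩ (not_reachable_sum_inl_inr x z)
  have hacyc : ((G ⊕g H).induce (Set.range Sum.inl)).IsAcyclic :=
    (Embedding.sumInl.isoInduceRange.isAcyclic_iff).mp hG
  refine hacyc (c.induce _ hsupp) ?_
  rw [← Walk.map_induce c hsupp] at hc
  exact (Walk.isCycle_map_iff_of_injective Subtype.val_injective).mp hc

lemma IsAcyclic.sum (hG : G.IsAcyclic) (hH : H.IsAcyclic) : (G ⊕g H).IsAcyclic := by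
  rintro (x | x) c hc
  · exact hG.not_isCycle_sum_inl c hc
  · exact hH.not_isCycle_sum_inl (c.map Iso.sumComm.toHom)
      ((Walk.isCycle_map_iff_of_injective Iso.sumComm.injective).mpr hc)

lemma IsTree.sum_sup_edge (hG : G.IsTree) (hH : H.IsTree) (a : V) (b : W) :
    ((G ⊕g H) ⊔ edge (Sum.inl a) (Sum.inr b)).IsTree :=
  ⟨hG.connected.sum_sup_edge hH.connected,
    (hG.isAcyclic.sum hH.isAcyclic).sup_edge_of_not_reachable (not_reachable_sum_inl_inr a b)⟩

lemma Connected.induce_image {V' : Type*} {G' : SimpleGraph V'} (f : G →g G') {s : Set V}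
    (hs : (G.induce s).Connected) : (G'.induce (f '' s)).Connected := by
  refine hs.map (induceHom f (Set.mapsTo_image f s)) ?_
  rintro ⟨_, x, hx, rfl⟩
  exact ⟨⟨x, hx⟩, rfl⟩

lemma Connected.induce_sum_sup_edge {s : Set V} {t : Set W} (hs : (G.induce s).Connected)
    (ht : (H.induce t).Connected) {a : V} {b : W} (ha : a ∈ s) (hb : b ∈ t) :
    (((G ⊕g H) ⊔ edge (Sum.inl a) (Sum.inr b)).induce (Sum.inl '' s ∪ Sum.inr '' t)).Connected := by
  set K := (G ⊕g H) ⊔ edge (Sum.inl a) (Sum.inr b)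
  have hl : (K.induce (Sum.inl '' s)).Connected :=
    hs.induce_image ((Hom.ofLE le_sup_left).comp Embedding.sumInl.toHom)
  have hr : (K.induce (Sum.inr '' t)).Connected :=
    ht.induce_image ((Hom.ofLE le_sup_left).comp Embedding.sumInr.toHom)
  have hab : (K.induce {Sum.inl a, Sum.inr b}).Connected :=
    induce_pair_connected_of_adj (by simp [K, edge_adj])
  have hlab := induce_union_connected hl.preconnected hab.preconnected ⟨.inl a, by simp [ha]⟩
  have hset : Sum.inl '' s ∪ Sum.inr '' t =
      Sum.inl '' s ∪ {Sum.inl a, Sum.inr b} ∪ Sum.inr '' t := by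
    ext (x | x) <;> aesop
  rw [hset]
  exact induce_union_connected hlab.preconnected hr.preconnected ⟨.inr b, by simp [hb]⟩

variable {ι : Type*} {T : SimpleGraph ι}

def PathConvex (T : SimpleGraph ι) (S : Set ι) : Prop :=
  ∀ ⦃u v : ι⦄ (p : T.Walk u v), p.IsPath → u ∈ S → v ∈ S → ∀ z ∈ p.support, z ∈ S

lemma PathConvex.inter {S S' : Set ι} (hS : T.PathConvex S) (hS' : T.PathConvex S') :
    T.PathConvex (S ∩ S') :=
  fun _ _ p hp hu hv z hz => ⟨hS p hp hu.1 hv.1 z hz, hS' p hp hu.2 hv.2 z hz⟩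

lemma IsAcyclic.pathConvex_of_preconnected_induce (hT : T.IsAcyclic) {S : Set ι}
    (hS : (T.induce S).Preconnected) : T.PathConvex S := by
  classical
  intro u v p hp hu hv z hz
  obtain ⟨w⟩ := hS ⟨u, hu⟩ ⟨v, hv⟩
  have hbypass : (w.map (Embedding.induce S).toHom).bypass = p :=
    congrArg Subtype.val ((hT.subsingleton_path u v).elim
      ⟨_, Walk.bypass_isPath _⟩ ⟨p, hp⟩)
  rw [← hbypass] at hz
  obtain ⟨z', -, rfl⟩ := List.mem_map.mp
    (Walk.support_map _ w ▸ Walk.support_bypass_subset_support _ hz)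
  exact z'.2

lemma Walk.exists_isPath_append_dropUntil [DecidableEq ι] {b c : ι} {q : T.Walk b c}
    (hq : q.IsPath) {a : ι} (p : T.Walk a b) (hp : p.IsPath) :
    ∃ m, ∃ hm : m ∈ q.support, ∃ u : T.Walk a m,
      u.support ⊆ p.support ∧ (u.append (q.dropUntil m hm)).IsPath := by
  -- `m` is the first vertex of `p` that lies on `q`
  induction p with
  | nil => exact ⟨_, q.start_mem_support, .nil, by simp, by simpa using hq⟩
  | @cons a a' b h p ih =>
    by_cases ha : a ∈ q.support
    · exact ⟨a, ha, .nil, by simp, by simpa using hq.dropUntil ha⟩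
    obtain ⟨m, hm, u, hsub, hu⟩ := ih hq hp.of_cons
    refine ⟨m, hm, .cons h u, ?_, ?_⟩
    · simpa using List.subset_cons_of_subset _ hsub
    · rw [Walk.cons_append, Walk.cons_isPath_iff, Walk.mem_support_append_iff]
      refine ⟨hu, ?_⟩
      rintro (hau | haq)
      · exact ((Walk.cons_isPath_iff h p).mp hp).2 (hsub hau)
      · exact ha (Walk.support_dropUntil_subset_support _ _ haq)

lemma IsAcyclic.exists_median_of_isPath (hT : T.IsAcyclic) {a b c : ι}
    {p : T.Walk a b} {q : T.Walk b c} {r : T.Walk a c}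
    (hp : p.IsPath) (hq : q.IsPath) (hr : r.IsPath) :
    ∃ m ∈ p.support, m ∈ q.support ∧ m ∈ r.support := by
  classical
  obtain ⟨m, hm, u, hsub, hu⟩ := Walk.exists_isPath_append_dropUntil hq p hp
  have hur : u.append (q.dropUntil m hm) = r :=
    congrArg Subtype.val ((hT.subsingleton_path a c).elim ⟨_, hu⟩ ⟨r, hr⟩)
  refine ⟨m, hsub u.end_mem_support, hm, ?_⟩
  rw [← hur]
  exact Walk.mem_support_append_iff _ _ |>.mpr (.inl u.end_mem_support)

lemma IsTree.inter_inter_nonempty_of_pathConvex (hT : T.IsTree) {S₁ S₂ S₃ : Set ι}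
    (h₁ : T.PathConvex S₁) (h₂ : T.PathConvex S₂) (h₃ : T.PathConvex S₃)
    (h₁₂ : (S₁ ∩ S₂).Nonempty) (h₁₃ : (S₁ ∩ S₃).Nonempty) (h₂₃ : (S₂ ∩ S₃).Nonempty) :
    (S₁ ∩ S₂ ∩ S₃).Nonempty := by
  obtain ⟨a, ha₁, ha₂⟩ := h₁₂
  obtain ⟨b, hb₁, hb₃⟩ := h₁₃
  obtain ⟨c, hc₂, hc₃⟩ := h₂₃
  obtain ⟨p, hp⟩ := (hT.connected a b).exists_isPath
  obtain ⟨q, hq⟩ := (hT.connected b c).exists_isPath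
  obtain ⟨r, hr⟩ := (hT.connected a c).exists_isPath
  obtain ⟨m, hmp, hmq, hmr⟩ := hT.isAcyclic.exists_median_of_isPath hp hq hr
  exact ⟨m, ⟨h₁ p hp ha₁ hb₁ m hmp, h₂ r hr ha₂ hc₂ m hmr⟩, h₃ q hq hb₃ hc₃ m hmq⟩

/-- The Helly property of subtrees of a tree. -/
lemma IsTree.exists_forall_mem_of_pairwise_inter_nonempty {α : Type*} (hT : T.IsTree)
    (F : Finset α) {S : α → Set ι} (hS : ∀ i ∈ F, T.PathConvex (S i))
    (hF : ∀ i ∈ F, ∀ j ∈ F, (S i ∩ S j).Nonempty) : ∃ t, ∀ i ∈ F, t ∈ S i := by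
  classical
  -- the extra set `R` lets the induction step replace `R` by `R ∩ S x`
  suffices key : ∀ R : Set ι, T.PathConvex R → R.Nonempty → (∀ i ∈ F, (R ∩ S i).Nonempty) →
      ∃ t ∈ R, ∀ i ∈ F, t ∈ S i by
    obtain ⟨t₀⟩ := hT.nonempty
    obtain ⟨t, -, ht⟩ := key Set.univ (fun _ _ _ _ _ _ _ _ => trivial) ⟨t₀, trivial⟩
      (by simpa using fun i hi => (hF i hi i hi).mono Set.inter_subset_left)
    exact ⟨t, ht⟩
  induction F using Finset.induction_on with
  | empty => exact fun R _ ⟨t, ht⟩ _ => ⟨t, ht, by simp⟩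
  | insert x F hx ih =>
    intro R hR _ hRS
    simp only [Finset.mem_insert, forall_eq_or_imp] at hS hF hRS ⊢
    obtain ⟨t, ⟨htR, htx⟩, ht⟩ := ih hS.2 (fun i hi j hj => hF.2 i hi |>.2 j hj) (R ∩ S x)
      (hR.inter hS.1) hRS.1 fun i hi =>
        hT.inter_inter_nonempty_of_pathConvex hR hS.1 (hS.2 i hi) hRS.1 (hRS.2 i hi) (hF.1.2 i hi)
    exact ⟨t, htR, htx, ht⟩

end SimpleGraph

section bagAlpha

variable {V : Type} {G : SimpleGraph V}

lemma bagAlpha_image_val {X : Set V} {ι : Type} (bag : ι → Set X) :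
    bagAlpha G (fun t => Subtype.val '' bag t) = bagAlpha (G.induce X) bag := by
  unfold bagAlpha
  congr 1
  ext n
  simp only [Set.mem_ofPred_eq, Set.subset_image_iff]
  constructor
  · rintro ⟨t, _, ⟨S, hS, rfl⟩, hind, rfl⟩
    exact ⟨t, S, hS, Subtype.val_injective.injOn.pairwise_image.mp hind,
      (Set.ncard_image_of_injective _ Subtype.val_injective).symm⟩
  · rintro ⟨t, S, hS, hind, rfl⟩
    exact ⟨t, _, ⟨S, hS, rfl⟩, Subtype.val_injective.injOn.pairwise_image.mpr hind,
      Set.ncard_image_of_injective _ Subtype.val_injective⟩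

lemma bagAlpha_sumElim [Finite V] {ι κ : Type} [Nonempty ι] [Nonempty κ] (f : ι → Set V)
    (g : κ → Set V) :
    bagAlpha G (Sum.elim f g) = max (bagAlpha G f) (bagAlpha G g) := by
  have hbdd : ∀ {ι : Type} (f : ι → Set V),
      BddAbove {n | ∃ t, ∃ S : Set V, S ⊆ f t ∧ IsIndepOn G S ∧ S.ncard = n} :=
    fun _ => ⟨Nat.card V, by rintro _ ⟨t, S, -, -, rfl⟩; exact Set.ncard_le_card S⟩
  have hne : ∀ {ι : Type} [Nonempty ι] (f : ι → Set V),
      {n | ∃ t, ∃ S : Set V, S ⊆ f t ∧ IsIndepOn G S ∧ S.ncard = n}.Nonempty :=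
    fun _ => ⟨0, Classical.arbitrary _, ∅, Set.empty_subset _, Set.pairwise_empty _,
      Set.ncard_empty _⟩
  have hsplit : {n | ∃ t, ∃ S : Set V, S ⊆ Sum.elim f g t ∧ IsIndepOn G S ∧ S.ncard = n} =
      {n | ∃ t, ∃ S : Set V, S ⊆ f t ∧ IsIndepOn G S ∧ S.ncard = n} ∪
        {n | ∃ t, ∃ S : Set V, S ⊆ g t ∧ IsIndepOn G S ∧ S.ncard = n} := by
    ext n
    simp [Sum.exists]
  unfold bagAlpha
  rw [hsplit]
  exact csSup_union (hbdd f) (hne f) (hbdd g) (hne g)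

end bagAlpha

namespace TreeDecomp

variable {V : Type} {G : SimpleGraph V}

lemma pathConvex_bags (td : TreeDecomp G) (v : V) : td.tree.PathConvex {t | v ∈ td.bag t} :=
  td.tree_isTree.isAcyclic.pathConvex_of_preconnected_induce (td.bag_connected v).preconnected

lemma exists_bag_superset_of_isClique (td : TreeDecomp G) {K : Set V} (hK : K.Finite)
    (hKG : G.IsClique K) : ∃ t, K ⊆ td.bag t := by
  have hpair : ∀ u ∈ K, ∀ v ∈ K, ∃ t, u ∈ td.bag t ∧ v ∈ td.bag t := by
    intro u hu v hv
    obtain rfl | huv := eq_or_ne u v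
    · obtain ⟨t, ht⟩ := td.mem_bag u
      exact ⟨t, ht, ht⟩
    · exact td.edge_bag (hKG hu hv huv)
  obtain ⟨t, ht⟩ := td.tree_isTree.exists_forall_mem_of_pairwise_inter_nonempty hK.toFinset
    (fun v _ => td.pathConvex_bags v)
    fun u hu v hv => hpair u (hK.mem_toFinset.mp hu) v (hK.mem_toFinset.mp hv)
  exact ⟨t, fun v hv => ht v (hK.mem_toFinset.mpr hv)⟩

variable {X Y : Set V}

lemma connected_induce_mem_image_val_bag (td : TreeDecomp (G.induce X)) {v : V} (hv : v ∈ X) :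
    (td.tree.induce {t | v ∈ Subtype.val '' td.bag t}).Connected := by
  have hset : {t | v ∈ Subtype.val '' td.bag t} = {t | ⟨v, hv⟩ ∈ td.bag t} := by
    ext t
    simp [hv]
  rw [hset]
  exact td.bag_connected ⟨v, hv⟩

lemma connected_induce_mem_sumElim_bag (tdX : TreeDecomp (G.induce X))
    (tdY : TreeDecomp (G.induce Y)) {tX : tdX.ι} {tY : tdY.ι}
    (hX : X ∩ Y ⊆ Subtype.val '' tdX.bag tX) (hY : X ∩ Y ⊆ Subtype.val '' tdY.bag tY)
    {v : V} (hv : v ∈ X ∪ Y) :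
    (((tdX.tree ⊕g tdY.tree) ⊔ edge (Sum.inl tX) (Sum.inr tY)).induce
      {t | v ∈ Sum.elim (fun t => Subtype.val '' tdX.bag t)
        (fun t => Subtype.val '' tdY.bag t) t}).Connected := by
  have hset : {t | v ∈ Sum.elim (fun t => Subtype.val '' tdX.bag t)
      (fun t => Subtype.val '' tdY.bag t) t} =
      Sum.inl '' {t | v ∈ Subtype.val '' tdX.bag t} ∪
        Sum.inr '' {t | v ∈ Subtype.val '' tdY.bag t} := by
    ext (t | t) <;> simp
  have hempty : ∀ {Z : Set V} (td : TreeDecomp (G.induce Z)), v ∉ Z →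
      {t | v ∈ Subtype.val '' td.bag t} = ∅ := by
    intro Z td hvZ
    ext t
    simp [hvZ]
  rw [hset]
  by_cases hvX : v ∈ X <;> by_cases hvY : v ∈ Y
  · exact (tdX.connected_induce_mem_image_val_bag hvX).induce_sum_sup_edge
      (tdY.connected_induce_mem_image_val_bag hvY) (hX ⟨hvX, hvY⟩) (hY ⟨hvX, hvY⟩)
  · rw [hempty tdY hvY, Set.image_empty, Set.union_empty]
    exact (tdX.connected_induce_mem_image_val_bag hvX).induce_image
      ((Hom.ofLE le_sup_left).comp Embedding.sumInl.toHom)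
  · rw [hempty tdX hvX, Set.image_empty, Set.empty_union]
    exact (tdY.connected_induce_mem_image_val_bag hvY).induce_image
      ((Hom.ofLE le_sup_left).comp Embedding.sumInr.toHom)
  · exact absurd hv (by simp [hvX, hvY])

variable (hXY : X ∪ Y = Set.univ) (hG : ∀ ⦃u v⦄, G.Adj u v → u ∈ X ∧ v ∈ X ∨ u ∈ Y ∧ v ∈ Y)
  (tdX : TreeDecomp (G.induce X)) (tdY : TreeDecomp (G.induce Y)) (tX : tdX.ι) (tY : tdY.ι)
  (hX : X ∩ Y ⊆ Subtype.val '' tdX.bag tX) (hY : X ∩ Y ⊆ Subtype.val '' tdY.bag tY)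

def glue : TreeDecomp G where
  ι := tdX.ι ⊕ tdY.ι
  tree := (tdX.tree ⊕g tdY.tree) ⊔ edge (Sum.inl tX) (Sum.inr tY)
  tree_isTree := tdX.tree_isTree.sum_sup_edge tdY.tree_isTree tX tY
  bag := Sum.elim (fun t => Subtype.val '' tdX.bag t) (fun t => Subtype.val '' tdY.bag t)
  mem_bag v := by
    rcases (hXY ▸ Set.mem_univ v : v ∈ X ∪ Y) with hv | hv
    · obtain ⟨t, ht⟩ := tdX.mem_bag ⟨v, hv⟩
      exact ⟨.inl t, _, ht, rfl⟩
    · obtain ⟨t, ht⟩ := tdY.mem_bag ⟨v, hv⟩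
      exact ⟨.inr t, _, ht, rfl⟩
  edge_bag u v huv := by
    rcases hG huv with ⟨hu, hv⟩ | ⟨hu, hv⟩
    · obtain ⟨t, htu, htv⟩ := tdX.edge_bag (show (G.induce X).Adj ⟨u, hu⟩ ⟨v, hv⟩ from huv)
      exact ⟨.inl t, ⟨_, htu, rfl⟩, ⟨_, htv, rfl⟩⟩
    · obtain ⟨t, htu, htv⟩ := tdY.edge_bag (show (G.induce Y).Adj ⟨u, hu⟩ ⟨v, hv⟩ from huv)
      exact ⟨.inr t, ⟨_, htu, rfl⟩, ⟨_, htv, rfl⟩⟩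
  bag_connected v := connected_induce_mem_sumElim_bag tdX tdY hX hY (hXY ▸ Set.mem_univ v)

lemma tdAlpha_glue [Finite V] :
    tdAlpha (glue hXY hG tdX tdY tX tY hX hY) = max (tdAlpha tdX) (tdAlpha tdY) := by
  have := tdX.tree_isTree.nonempty
  have := tdY.tree_isTree.nonempty
  unfold tdAlpha
  exact (bagAlpha_sumElim _ _).trans (by rw [bagAlpha_image_val, bagAlpha_image_val])

end TreeDecomp

theorem stmt12_general {V : Type} [Fintype V] (G : SimpleGraph V) (A B C : Set V)
    (hcover : A ∪ B ∪ C = Set.univ)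
    (hAB : Disjoint A B)
    (hnoedge : ∀ a ∈ A, ∀ b ∈ B, ¬ G.Adj a b)
    (hclique : G.IsClique C)
    (tdA : TreeDecomp (G.induce (A ∪ C))) (tdB : TreeDecomp (G.induce (B ∪ C))) :
    ∃ td : TreeDecomp G, tdAlpha td = max (tdAlpha tdA) (tdAlpha tdB) := by
  have hXY : (A ∪ C) ∪ (B ∪ C) = Set.univ := by
    rw [← hcover]
    ext v
    simp only [Set.mem_union]
    tauto
  have hG : ∀ ⦃u v⦄, G.Adj u v → u ∈ A ∪ C ∧ v ∈ A ∪ C ∨ u ∈ B ∪ C ∧ v ∈ B ∪ C := by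
    intro u v huv
    have hu : u ∈ A ∪ B ∪ C := hcover ▸ Set.mem_univ u
    have hv : v ∈ A ∪ B ∪ C := hcover ▸ Set.mem_univ v
    have h₁ : ¬ (u ∈ A ∧ v ∈ B) := fun h => hnoedge u h.1 v h.2 huv
    have h₂ : ¬ (v ∈ A ∧ u ∈ B) := fun h => hnoedge v h.1 u h.2 huv.symm
    simp only [Set.mem_union] at hu hv ⊢
    tauto
  have hsep : (A ∪ C) ∩ (B ∪ C) ⊆ C := by
    rintro v ⟨hvA | hvC, hvB | hvC'⟩
    · exact absurd hvB (hAB.notMem_of_mem_left hvA)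
    all_goals assumption
  have hcliqueX : ∀ X : Set V, (G.induce X).IsClique (Subtype.val ⁻¹' C) := fun X =>
    isClique_induce_iff.mpr (hclique.subset (Set.image_preimage_subset _ _))
  obtain ⟨tA, htA⟩ := tdA.exists_bag_superset_of_isClique (Set.toFinite _) (hcliqueX _)
  obtain ⟨tB, htB⟩ := tdB.exists_bag_superset_of_isClique (Set.toFinite _) (hcliqueX _)
  exact ⟨.glue hXY hG tdA tdB tA tB (fun v hv => ⟨⟨v, hv.1⟩, htA (hsep hv), rfl⟩)
    (fun v hv => ⟨⟨v, hv.2⟩, htB (hsep hv), rfl⟩), TreeDecomp.tdAlpha_glue ..⟩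

theorem stmt12 {V : Type} [Fintype V] (G : SimpleGraph V) (A B C : Set V)
    (hA : A.Nonempty) (hB : B.Nonempty)
    (hcover : A ∪ B ∪ C = Set.univ)
    (hAB : Disjoint A B) (hAC : Disjoint A C) (hBC : Disjoint B C)
    (hnoedge : ∀ a ∈ A, ∀ b ∈ B, ¬ G.Adj a b)
    (hclique : G.IsClique C)
    (tdA : TreeDecomp (G.induce (A ∪ C))) (tdB : TreeDecomp (G.induce (B ∪ C))) :
    ∃ td : TreeDecomp G, tdAlpha td = max (tdAlpha tdA) (tdAlpha tdB) :=
  stmt12_general G A B C hcover hAB hnoedge hclique tdA tdB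
end

section
/- Let G be a graph, T = (T, {X_t}) a tree decomposition of G, and H = {H_j}_{j∈J} a finite family of connected nonnull subgraphs of G. Define G(H) as the graph with vertex set J where distinct i, j are adjacent if and only if H_i and H_j share a vertex or G has an edge with one endpoint in H_i and the other in H_j. For each t let X'_t = {j ∈ J : V(H_j) ∩ X_t ≠ ∅}. Then T' = (T, {X'_t}) is a tree decomposition of G(H), and its independence number satisfies α(T') ≤ α(T). -/
open SimpleGraph

/-- The derived graph `G(H)` of a family `H` of subgraphs of `G`: vertices are the
members of the family, two distinct members being adjacent if and only if they share
a vertex or `G` has an edge with one endpoint in each of them. -/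
def derivedGraph {V : Type} (G : SimpleGraph V) {J : Type} (H : J → G.Subgraph) :
    SimpleGraph J :=
  SimpleGraph.fromRel fun i j =>
    (∃ v, v ∈ (H i).verts ∧ v ∈ (H j).verts) ∨
    (∃ a b, a ∈ (H i).verts ∧ b ∈ (H j).verts ∧ G.Adj a b)

lemma reach_of_subset {V : Type} {G : SimpleGraph V} {A B : Set V} (hBA : B ⊆ A)
    (hB : (G.induce B).Connected) {a b : V} (ha : a ∈ B) (hb : b ∈ B)
    (ha' : a ∈ A) (hb' : b ∈ A) : (G.induce A).Reachable ⟨a, ha'⟩ ⟨b, hb'⟩ := by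
  let f : G.induce B →g G.induce A :=
    ⟨fun x => ⟨x.1, hBA x.2⟩, by intro x y h; exact h⟩
  exact (hB.preconnected ⟨a, ha⟩ ⟨b, hb⟩).map f

theorem stmt18 {V : Type} [Fintype V] (G : SimpleGraph V) (td : TreeDecomp G)
    {J : Type} [Fintype J] (H : J → G.Subgraph)
    (hne : ∀ j, (H j).verts.Nonempty) (hconn : ∀ j, (H j).Connected) :
    (∀ j : J, ∃ t, j ∈ {j' | ((H j').verts ∩ td.bag t).Nonempty}) ∧
    (∀ i j : J, (derivedGraph G H).Adj i j →
      ∃ t, i ∈ {j' | ((H j').verts ∩ td.bag t).Nonempty} ∧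
           j ∈ {j' | ((H j').verts ∩ td.bag t).Nonempty}) ∧
    (∀ j : J,
      (td.tree.induce {t | j ∈ {j' | ((H j').verts ∩ td.bag t).Nonempty}}).Connected) ∧
    bagAlpha (derivedGraph G H)
        (fun t => {j' | ((H j').verts ∩ td.bag t).Nonempty}) ≤ tdAlpha td := by
  refine ⟨?_, ?_, ?_, ?_⟩
  · intro j
    obtain ⟨v, hv⟩ := hne j
    obtain ⟨t, ht⟩ := td.mem_bag v
    exact ⟨t, v, hv, ht⟩
  · intro i j hadj
    rw [derivedGraph, SimpleGraph.fromRel_adj] at hadj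
    obtain ⟨hij, hrel⟩ := hadj
    rcases hrel with (⟨v, hvi, hvj⟩ | ⟨a, b, ha, hb, hab⟩) | (⟨v, hvj, hvi⟩ | ⟨a, b, ha, hb, hab⟩)
    · obtain ⟨t, ht⟩ := td.mem_bag v
      exact ⟨t, ⟨v, hvi, ht⟩, ⟨v, hvj, ht⟩⟩
    · obtain ⟨t, hta, htb⟩ := td.edge_bag hab
      exact ⟨t, ⟨a, ha, hta⟩, ⟨b, hb, htb⟩⟩
    · obtain ⟨t, ht⟩ := td.mem_bag v
      exact ⟨t, ⟨v, hvi, ht⟩, ⟨v, hvj, ht⟩⟩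
    · obtain ⟨t, hta, htb⟩ := td.edge_bag hab
      exact ⟨t, ⟨b, hb, htb⟩, ⟨a, ha, hta⟩⟩
  · intro j
    set A : Set td.ι := {t | j ∈ {j' | ((H j').verts ∩ td.bag t).Nonempty}} with hA
    have hnonempty : A.Nonempty := by
      obtain ⟨v, hv⟩ := hne j
      obtain ⟨t, ht⟩ := td.mem_bag v
      exact ⟨t, v, hv, ht⟩
    have key : ∀ (v₁ v₂ : (H j).verts) (w : SimpleGraph.Walk (H j).coe v₁ v₂)
        (t₁ t₂ : td.ι) (h1 : (v₁ : V) ∈ td.bag t₁) (h2 : (v₂ : V) ∈ td.bag t₂),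
        (td.tree.induce A).Reachable ⟨t₁, ⟨v₁, v₁.2, h1⟩⟩ ⟨t₂, ⟨v₂, v₂.2, h2⟩⟩ := by
      intro v₁ v₂ w
      induction w with
      | @nil u =>
        intro t₁ t₂ h1 h2
        refine reach_of_subset ?_ (td.bag_connected u) h1 h2 _ _
        intro t ht
        exact ⟨u, u.2, ht⟩
      | @cons u v w' h p ih =>
        intro t₁ t₂ h1 h2
        have hG : G.Adj (u : V) (v : V) := (H j).adj_sub h
        obtain ⟨t', hu', hv'⟩ := td.edge_bag hG
        have r1 : (td.tree.induce A).Reachable ⟨t₁, ⟨u, u.2, h1⟩⟩ ⟨t', ⟨u, u.2, hu'⟩⟩ := by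
          refine reach_of_subset ?_ (td.bag_connected u) h1 hu' _ _
          intro t ht
          exact ⟨u, u.2, ht⟩
        exact r1.trans (ih t' t₂ hv' h2)
    rw [SimpleGraph.connected_iff]
    constructor
    · rintro ⟨t₁, v₁, hv₁, h1⟩ ⟨t₂, v₂, hv₂, h2⟩
      obtain ⟨w⟩ := (hconn j).preconnected ⟨v₁, hv₁⟩ ⟨v₂, hv₂⟩
      exact key ⟨v₁, hv₁⟩ ⟨v₂, hv₂⟩ w t₁ t₂ h1 h2
    · obtain ⟨t, ht⟩ := hnonempty
      exact ⟨⟨t, ht⟩⟩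
  · -- bagAlpha ≤ tdAlpha
    have hι : Nonempty td.ι := td.tree_isTree.isConnected.nonempty
    obtain ⟨t₀⟩ := hι
    apply csSup_le_csSup
    · refine ⟨Fintype.card V, ?_⟩
      rintro n ⟨t, S, hSb, hSi, rfl⟩
      calc S.ncard ≤ (Set.univ : Set V).ncard :=
            Set.ncard_le_ncard (Set.subset_univ S) Set.finite_univ
        _ = Fintype.card V := by rw [Set.ncard_univ]; simp
    · exact ⟨0, t₀, ∅, Set.empty_subset _, Set.pairwise_empty _, Set.ncard_empty _⟩
    · rintro n ⟨t, S, hSb, hSi, rfl⟩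
      classical
      have hpick : ∀ j ∈ S, ((H j).verts ∩ td.bag t).Nonempty := fun j hj => hSb hj
      set f : J → V := fun j =>
        if h : ((H j).verts ∩ td.bag t).Nonempty then h.choose else (hne j).choose with hf
      have hfmem : ∀ j ∈ S, f j ∈ (H j).verts ∩ td.bag t := by
        intro j hj
        have h := hpick j hj
        simp only [hf, dif_pos h]
        exact h.choose_spec
      have hinj : Set.InjOn f S := by
        intro i hi j hj hfe
        by_contra hij
        have : (derivedGraph G H).Adj i j := by
          rw [derivedGraph, SimpleGraph.fromRel_adj]
          exact ⟨hij, Or.inl (Or.inl ⟨f i, (hfmem i hi).1, hfe ▸ (hfmem j hj).1⟩)⟩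
        exact hSi hi hj hij this
      refine ⟨t, f '' S, ?_, ?_, ?_⟩
      · rintro v ⟨j, hj, rfl⟩
        exact (hfmem j hj).2
      · rintro u ⟨i, hi, rfl⟩ v ⟨j, hj, rfl⟩ huv hGuv
        have hij : i ≠ j := fun h => huv (by rw [h])
        have : (derivedGraph G H).Adj i j := by
          rw [derivedGraph, SimpleGraph.fromRel_adj]
          exact ⟨hij, Or.inl (Or.inr ⟨f i, f j, (hfmem i hi).1, (hfmem j hj).1, hGuv⟩)⟩
        exact hSi hi hj hij this
      · exact Set.ncard_image_of_injOn hinj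
end
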